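/- Let B be a pairwise balanced design over a finite linearly ordered set A such that no block of B contains all of A. Then (|A| + |B|) / 2 ≤ α(Γ_{B,3}) ≤ |A| + |B|. -/

import Mathlib

/-!
Two independent sets give the lower bound `max |A| |B| ≥ (|A| + |B|) / 2`. Choosing in every block
its least point gives `|B|` pairwise non-adjacent incidences. Letting `a` be the largest point of
`A` and choosing for every point `x` the block `C_x` through `x` and `a` gives `|A|` of them: an
edge `(x, C_x) ~ (y, C_y)` with `x < y ≤ a` would put `x` and `a` in two different blocks.

For the upper bound, split an independent set into the incidences `(x, C)` whose point `x` carries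
another incidence of the set, and the others. The latter are determined by their point; each of
the former has the largest point of its block among the vertices of the set, so it is determined
by its block.
-/

open Finset

/-- `B` is a weakly `m`-wise balanced design over the finite set `A`:
every block is a nonempty subset of `A`, every point of `A` lies in at least
one block, and any `m` pairwise distinct points of `A` are contained together
in at most one block. -/
def IsWeaklyBalancedDesign {α : Type*} [DecidableEq α] (m : ℕ)
    (A : Finset α) (B : Finset (Finset α)) : Prop :=
  (∀ C ∈ B, C ⊆ A) ∧
  (∀ C ∈ B, C.Nonempty) ∧
  (∀ x ∈ A, ∃ C ∈ B, x ∈ C) ∧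
  (∀ S : Finset α, S ⊆ A → S.card = m → (B.filter fun C => S ⊆ C).card ≤ 1)

/-- The vertex set of `Γ_{B,m}`: all incidence pairs `(x, C)` with `x ∈ C ∈ B`. -/
def designVerts {α : Type*} [DecidableEq α] (B : Finset (Finset α)) :
    Finset (α × Finset α) :=
  B.biUnion fun C => C.image fun x => (x, C)

/-- The graph `Γ_{B,m}` on incidence pairs: `(x, C₁)` and `(y, C₂)` are adjacent
iff `x < y`, `C₁ ≠ C₂` and `x ∈ C₂`, or symmetrically `y < x`, `C₂ ≠ C₁` and `y ∈ C₁`. -/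
def designGraph {α : Type*} [inst : LinearOrder α] (B : Finset (Finset α)) :
    SimpleGraph (designVerts (α := α) B) where
  Adj u v :=
    (u.val.1 < v.val.1 ∧ u.val.2 ≠ v.val.2 ∧ u.val.1 ∈ v.val.2) ∨
    (v.val.1 < u.val.1 ∧ v.val.2 ≠ u.val.2 ∧ v.val.1 ∈ u.val.2)
  symm := ⟨fun u v h => by tauto⟩
  loopless := ⟨fun u h => by
    rcases h with ⟨h, _, _⟩ | ⟨h, _, _⟩ <;> exact lt_irrefl _ h⟩

/-- The independence number of a graph: the largest size of an independent set of vertices. -/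
noncomputable def indepNum {V : Type*} (G : SimpleGraph V) : ℕ :=
  sSup {n | ∃ s : Finset V, s.card = n ∧ ∀ x ∈ s, ∀ y ∈ s, ¬ G.Adj x y}

lemma indepNum_eq_simpleGraph_indepNum {V : Type*} (G : SimpleGraph V) :
    indepNum G = G.indepNum := by
  have hindep (s : Finset V) : (∀ x ∈ s, ∀ y ∈ s, ¬ G.Adj x y) ↔ G.IsIndepSet s :=
    ⟨fun h x hx y hy _ => h x hx y hy,
      fun h x hx y hy => (eq_or_ne x y).elim (fun hxy => hxy ▸ G.loopless.irrefl x) (h hx hy)⟩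
  simp only [indepNum, SimpleGraph.indepNum, SimpleGraph.isNIndepSet_iff, hindep, and_comm]

lemma SimpleGraph.card_le_indepNum_of_isIndepSet_range {V ι : Type*} [Finite V] [Fintype ι]
    {G : SimpleGraph V} {f : ι → V} (hf : Function.Injective f)
    (hG : G.IsIndepSet (Set.range f)) : Fintype.card ι ≤ G.indepNum := by
  classical
  have := (show G.IsIndepSet ((univ.image f : Finset V) : Set V) by simpa).card_le_indepNum
  rwa [card_image_of_injective _ hf, card_univ] at this

lemma mem_designVerts {α : Type*} [DecidableEq α] {B : Finset (Finset α)}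
    {u : α × Finset α} : u ∈ designVerts B ↔ u.2 ∈ B ∧ u.1 ∈ u.2 := by
  simp only [designVerts, mem_biUnion, mem_image]
  constructor
  · rintro ⟨C, hC, x, hx, rfl⟩
    exact ⟨hC, hx⟩
  · exact fun h => ⟨u.2, h.1, u.1, h.2, rfl⟩

section DesignGraph

variable {α : Type*} [LinearOrder α] {A : Finset α} {B : Finset (Finset α)}

lemma isIndepSet_designGraph_iff {s : Set (designVerts B)} :
    (designGraph B).IsIndepSet s ↔
      ∀ u ∈ s, ∀ v ∈ s, u.1.1 < v.1.1 → u.1.1 ∈ v.1.2 → u.1.2 = v.1.2 := by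
  constructor
  · intro h u hu v hv hlt hmem
    by_contra hne
    exact h hu hv (fun huv => hlt.ne (congrArg (·.1.1) huv)) (Or.inl ⟨hlt, hne, hmem⟩)
  · rintro h u hu v hv - (⟨hlt, hne, hmem⟩ | ⟨hlt, hne, hmem⟩)
    · exact hne (h u hu v hv hlt hmem)
    · exact hne (h v hv u hu hlt hmem)

lemma card_le_card_add_card_of_subset_designVerts (hBA : ∀ C ∈ B, C ⊆ A)
    {s : Finset (α × Finset α)} (hs : s ⊆ designVerts B)
    (hind : ∀ u ∈ s, ∀ v ∈ s, u.1 < v.1 → u.1 ∈ v.2 → u.2 = v.2) :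
    #s ≤ #A + #B := by
  classical
  let shared (u : α × Finset α) : Prop := ∃ w ∈ s, w.1 = u.1 ∧ w.2 ≠ u.2
  have fst_le_of_shared {u v} (hu : u ∈ s) (hv : v ∈ s) (hshared : shared u) (hC : u.2 = v.2) :
      v.1 ≤ u.1 := by
    obtain ⟨w, hw, hwu, hne⟩ := hshared
    by_contra! hlt
    refine hne ((hind w hw v hv (hwu ▸ hlt) ?_).trans hC.symm)
    rw [hwu, ← hC]
    exact (mem_designVerts.mp (hs hu)).2
  have hshared_card : #(s.filter shared) ≤ #B := by
    refine card_le_card_of_injOn Prod.snd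
      (fun u hu => (mem_designVerts.mp (hs (mem_filter.mp hu).1)).1) ?_
    intro u hu v hv hC
    simp only [coe_filter, Set.mem_ofPred_eq] at hu hv
    exact Prod.ext (le_antisymm (fst_le_of_shared hv.1 hu.1 hv.2 hC.symm)
      (fst_le_of_shared hu.1 hv.1 hu.2 hC)) hC
  have hunshared_card : #(s.filter (¬ shared ·)) ≤ #A := by
    refine card_le_card_of_injOn Prod.fst (fun u hu => ?_) ?_
    · obtain ⟨hC, hx⟩ := mem_designVerts.mp (hs (mem_filter.mp hu).1)
      exact hBA _ hC hx
    · intro u hu v hv hx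
      simp only [coe_filter, Set.mem_ofPred_eq] at hu hv
      by_contra hne
      exact hu.2 ⟨v, hv.1, hx.symm, fun hC => hne (Prod.ext hx hC.symm)⟩
  rw [← card_filter_add_card_filter_not shared]
  omega

lemma indepNum_designGraph_le (hBA : ∀ C ∈ B, C ⊆ A) :
    (designGraph B).indepNum ≤ #A + #B := by
  obtain ⟨s, hs⟩ := (designGraph B).exists_isNIndepSet_indepNum
  have hind := isIndepSet_designGraph_iff.mp hs.isIndepSet
  rw [← hs.card_eq, ← card_map (Function.Embedding.subtype _)]
  refine card_le_card_add_card_of_subset_designVerts hBA (fun u hu => ?_) ?_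
  · obtain ⟨v, -, rfl⟩ := mem_map.mp hu
    exact v.2
  · simp only [mem_map, Function.Embedding.subtype_apply]
    rintro _ ⟨u, hu, rfl⟩ _ ⟨v, hv, rfl⟩
    exact hind u hu v hv

lemma card_blocks_le_indepNum_designGraph (hne : ∀ C ∈ B, C.Nonempty) :
    #B ≤ (designGraph B).indepNum := by
  let f (C : B) : designVerts B :=
    ⟨((C : Finset α).min' (hne C C.2), C),
      mem_designVerts.mpr ⟨C.2, min'_mem (C : Finset α) (hne C C.2)⟩⟩
  have hf : Function.Injective f := fun C D h => Subtype.ext (congrArg (·.1.2) h)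
  rw [← Fintype.card_coe B]
  refine SimpleGraph.card_le_indepNum_of_isIndepSet_range hf
    (isIndepSet_designGraph_iff.mpr ?_)
  rintro _ ⟨C, rfl⟩ _ ⟨D, rfl⟩ hlt hmem
  exact absurd (min'_le _ _ hmem) hlt.not_ge

lemma card_points_le_indepNum_designGraph (hcov : ∀ x ∈ A, ∃ C ∈ B, x ∈ C)
    (hpair : ∀ x ∈ A, ∀ y ∈ A, x ≠ y → (B.filter fun C => x ∈ C ∧ y ∈ C).card = 1) :
    #A ≤ (designGraph B).indepNum := by
  obtain rfl | hA := A.eq_empty_or_nonempty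
  · simp
  set a := A.max' hA
  have ha : a ∈ A := A.max'_mem hA
  have hunique {x C D} (hx : x ∈ A) (hxa : x ≠ a) (hC : C ∈ B ∧ x ∈ C ∧ a ∈ C)
      (hD : D ∈ B ∧ x ∈ D ∧ a ∈ D) : C = D :=
    card_le_one.mp (hpair x hx a ha hxa).le C (mem_filter.mpr hC) D (mem_filter.mpr hD)
  have hexists (x : A) : ∃ C ∈ B, x.1 ∈ C ∧ a ∈ C := by
    by_cases hxa : x.1 = a
    · obtain ⟨C, hC, hxC⟩ := hcov x x.2
      exact ⟨C, hC, hxC, hxa ▸ hxC⟩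
    · obtain ⟨C, hC⟩ := card_pos.mp ((hpair x x.2 a ha hxa).symm ▸ Nat.one_pos)
      exact ⟨C, mem_filter.mp hC⟩
  choose C hCB hxC haC using hexists
  let f (x : A) : designVerts B := ⟨(x, C x), mem_designVerts.mpr ⟨hCB x, hxC x⟩⟩
  have hf : Function.Injective f := fun x y h => Subtype.ext (congrArg (·.1.1) h)
  rw [← Fintype.card_coe A]
  refine SimpleGraph.card_le_indepNum_of_isIndepSet_range hf
    (isIndepSet_designGraph_iff.mpr ?_)
  rintro _ ⟨x, rfl⟩ _ ⟨y, rfl⟩ hlt hmem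
  exact hunique x.2 (hlt.trans_le (A.le_max' _ y.2)).ne ⟨hCB x, hxC x, haC x⟩
    ⟨hCB y, hmem, haC y⟩

end DesignGraph

theorem pbd_designGraph_indepNum_general {α : Type*} [LinearOrder α]
    (A : Finset α) (B : Finset (Finset α))
    (hB : IsWeaklyBalancedDesign 2 A B)
    (hpair : ∀ x ∈ A, ∀ y ∈ A, x ≠ y → (B.filter fun C => x ∈ C ∧ y ∈ C).card = 1) :
    ((A.card : ℝ) + (B.card : ℝ)) / 2 ≤ (indepNum (designGraph B) : ℝ) ∧
      indepNum (designGraph B) ≤ A.card + B.card := by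
  obtain ⟨hBA, hne, hcov, -⟩ := hB
  rw [indepNum_eq_simpleGraph_indepNum]
  have hpoints := card_points_le_indepNum_designGraph hcov hpair
  have hblocks := card_blocks_le_indepNum_designGraph hne
  refine ⟨?_, indepNum_designGraph_le hBA⟩
  rw [div_le_iff₀ two_pos]
  exact_mod_cast (by omega : #A + #B ≤ (designGraph B).indepNum * 2)

/-- Let `B` be a pairwise balanced design over a finite linearly ordered set `A` (a weakly
`2`-wise balanced design in which every block has at least two points and any two distinct
points lie together in exactly one block) such that no block contains all of `A`.
Then `(|A| + |B|)/2 ≤ α(Γ_{B,3}) ≤ |A| + |B|`. -/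
theorem pbd_designGraph_indepNum {α : Type*} [LinearOrder α]
    (A : Finset α) (B : Finset (Finset α))
    (hB : IsWeaklyBalancedDesign 2 A B)
    (htwo : ∀ C ∈ B, 2 ≤ C.card)
    (hpair : ∀ x ∈ A, ∀ y ∈ A, x ≠ y → (B.filter fun C => x ∈ C ∧ y ∈ C).card = 1)
    (hnotall : ∀ C ∈ B, ¬ A ⊆ C) :
    ((A.card : ℝ) + (B.card : ℝ)) / 2 ≤ (indepNum (designGraph B) : ℝ) ∧
      indepNum (designGraph B) ≤ A.card + B.card :=
  pbd_designGraph_indepNum_general A B hB hpair
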